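/- Let ∅ = F_0 ⊂ F_1 ⊂ ⋯ ⊂ F_k ⊂ F_{k+1} = E be a chain of flats of M and let x be a fractional matching in (M, L) satisfying ∑_{l∈L} a(F_i)_l x_l = r(F_i) for every i = 1,…,k. Then for every choice of sets S_0,…,S_k with S_i ⊆ F_{i+1} \ F_i and S_i ∪ F_i a flat of M for each i, the inequality ∑_{l∈L} a(S_0 ∪ ⋯ ∪ S_k)_l x_l ≤ ∑_{i=0}^{k} (r(S_i ∪ F_i) − r(F_i)) holds. (A fractional matching in M that is tight on every flat of the chain is a fractional matching in M⋆𝓕 := ⊕_{i=0}^{k} (M|F_{i+1})/F_i.) -/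

import Mathlib

/-!
Write `φ(X) = ∑_{l ∈ L} a(X)_l x_l` and `U_j = S_0 ∪ ⋯ ∪ S_{j-1} ⊆ F_j`. For each line `l`
the degree increment `a(U_j ∪ S_j)_l - a(U_j)_l` is at most `a(S_j ∪ F_j)_l - a(F_j)_l`:
the only non-monotone case is a line meeting both `F_j` and `S_j`, and such a line lies in
the flat `S_j ∪ F_j`, since it has rank at most two. Weighting by `x` and using
`φ(S_j ∪ F_j) ≤ r(S_j ∪ F_j)` and the tightness `φ(F_j) = r(F_j)`, the increments of
`φ(U_j)` are bounded by `r(S_j ∪ F_j) - r(F_j)`, and the bound follows by telescoping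
from `U_0 = ∅`.
-/

open Set

variable {α : Type*}

/-- The rank of a set in a matroid: the supremum of the cardinalities of its
independent subsets. -/
noncomputable def Matroid.rk' (M : Matroid α) (X : Set α) : ℕ :=
  sSup {n : ℕ | ∃ I, M.Indep I ∧ I ⊆ X ∧ I.ncard = n}

/-- A matroid is loopless if the closure of the empty set is empty. -/
def Matroid.Loopless' (M : Matroid α) : Prop := M.closure ∅ = ∅

/-- A line of a matroid: a subset of the ground set of rank 1 or 2. -/
def Matroid.IsLine (M : Matroid α) (l : Set α) : Prop :=
  l ⊆ M.E ∧ (M.rk' l = 1 ∨ M.rk' l = 2)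

open scoped Classical in
/-- Degree `a(X)_l` of a set `X` at a line `l`. -/
noncomputable def deg (X l : Set α) : ℕ :=
  if X ∩ l = ∅ then 0 else if l ⊆ X then 2 else 1

/-- A fractional matching of the pair `(M, L)`. -/
def IsFracMatching (M : Matroid α) (L : Finset (Set α)) (x : Set α → ℝ) : Prop :=
  (∀ l ∈ L, 0 ≤ x l) ∧
  ∀ F : Set α, M.IsFlat F → ∑ l ∈ L, (deg F l : ℝ) * x l ≤ (M.rk' F : ℝ)

/-- `a(y)_l` for a finitely supported `y` on flats. -/
noncomputable def aDual (y : Set α →₀ ℝ) (l : Set α) : ℝ :=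
  y.sum fun F c => c * (deg F l : ℝ)

/-- `r(y)` for a finitely supported `y` on flats. -/
noncomputable def rDual (M : Matroid α) (y : Set α →₀ ℝ) : ℝ :=
  y.sum fun F c => c * (M.rk' F : ℝ)

lemma Matroid.rk'_empty (M : Matroid α) : M.rk' ∅ = 0 := by
  simp [Matroid.rk', subset_empty_iff]

lemma Matroid.ncard_le_rk' {M : Matroid α} {I X : Set α} (hI : M.Indep I) (hIX : I ⊆ X)
    (hX : M.rk' X ≠ 0) : I.ncard ≤ M.rk' X := by
  by_cases hbdd : BddAbove {n : ℕ | ∃ I, M.Indep I ∧ I ⊆ X ∧ I.ncard = n}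
  · exact le_csSup hbdd ⟨I, hI, hIX, rfl⟩
  · exact absurd (by rw [Matroid.rk', csSup_of_not_bddAbove hbdd, csSup_empty]; rfl) hX

namespace Matroid.IsLine

variable {M : Matroid α} {l : Set α}

lemma ncard_le_two (hl : M.IsLine l) {I : Set α} (hI : M.Indep I) (hIl : I ⊆ l) :
    I.ncard ≤ 2 := by
  rcases hl.2 with h | h <;> have := ncard_le_rk' hI hIl (by omega) <;> omega

lemma subset_of_mem_of_mem_diff (hM : M.Loopless') (hl : M.IsLine l) {T G : Set α}
    (hT : M.IsFlat T) (hG : M.IsFlat G) (hTG : T ⊆ G) {p q : α} (hpl : p ∈ l) (hpT : p ∈ T)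
    (hql : q ∈ l) (hqGT : q ∈ G \ T) : l ⊆ G := by
  have : M.Loopless := ⟨hM⟩
  have hp : M.Indep {p} := (M.isNonloop_of_loopless (hl.1 hpl)).indep
  have hq_cl : q ∉ M.closure {p} := fun h =>
    hqGT.2 ((M.closure_subset_closure (singleton_subset_iff.2 hpT)).trans hT.closure.subset h)
  have hqp : q ≠ p := by rintro rfl; exact hqGT.2 hpT
  have hqp_indep : M.Indep {q, p} :=
    (hp.insert_indep_iff_of_notMem hqp).2 ⟨hl.1 hql, hq_cl⟩
  have hl_cl : l ⊆ M.closure {q, p} := by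
    intro e hel
    by_contra he
    obtain ⟨hind, he'⟩ := (hqp_indep.notMem_closure_iff (hl.1 hel)).1 he
    have h3 : (insert e {q, p} : Set α).ncard = 3 := by
      rw [ncard_insert_of_notMem he', ncard_pair hqp]
    have := hl.ncard_le_two hind (insert_subset hel (pair_subset hql hpl))
    omega
  exact hl_cl.trans ((M.closure_subset_closure (pair_subset hqGT.1 (hTG hpT))).trans
    hG.closure.subset)

end Matroid.IsLine

section deg

variable {X Y l : Set α}

@[simp]
lemma deg_empty : deg ∅ l = 0 := by
  simp [deg]

lemma deg_le_two : deg X l ≤ 2 := by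
  unfold deg; split_ifs <;> omega

lemma deg_mono (h : X ⊆ Y) : deg X l ≤ deg Y l := by
  unfold deg
  have := inter_subset_inter_left l h
  have := fun h' : l ⊆ X => h'.trans h
  split_ifs <;> simp_all [subset_empty_iff]

lemma deg_eq_two (hl : l.Nonempty) (h : l ⊆ X) : deg X l = 2 := by
  have : X ∩ l ≠ ∅ := (hl.mono (subset_inter h subset_rfl)).ne_empty
  simp [deg, this, h]

lemma deg_eq_zero (h : X ∩ l = ∅) : deg X l = 0 := by
  simp [deg, h]

lemma deg_le_one (h : ¬ l ⊆ X) : deg X l ≤ 1 := by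
  unfold deg; split_ifs <;> omega

lemma one_le_deg (h : (X ∩ l).Nonempty) : 1 ≤ deg X l := by
  unfold deg; rw [if_neg h.ne_empty]; split_ifs <;> omega

lemma deg_union_of_disjoint (h : Disjoint Y l) : deg (Y ∪ X) l = deg X l := by
  have hl : (Y ∪ X) ∩ l = X ∩ l := by
    rw [union_inter_distrib_right, h.inter_eq, empty_union]
  have hsub : l ⊆ Y ∪ X ↔ l ⊆ X := ⟨fun h' => h.symm.subset_right_of_subset_union h',
    fun h' => h'.trans subset_union_right⟩
  unfold deg
  rw [hl]
  split_ifs <;> simp_all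

end deg

lemma deg_union_add_deg_le {M : Matroid α} (hM : M.Loopless') {l S T X : Set α}
    (hl : M.IsLine l) (hT : M.IsFlat T) (hST : M.IsFlat (S ∪ T)) (hdisj : Disjoint S T)
    (hXT : X ⊆ T) : deg (S ∪ X) l + deg T l ≤ deg (S ∪ T) l + deg X l := by
  have hmono : deg (S ∪ X) l ≤ deg (S ∪ T) l := deg_mono (union_subset_union_right S hXT)
  by_cases hSl : Disjoint S l
  · rw [deg_union_of_disjoint hSl]
    have := deg_mono (l := l) (subset_union_right : T ⊆ S ∪ T)
    omega
  obtain ⟨q, hqS, hql⟩ := not_disjoint_iff.1 hSl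
  by_cases hTl : T ∩ l = ∅
  · rw [deg_eq_zero hTl]
    omega
  obtain ⟨p, hpT, hpl⟩ := nonempty_iff_ne_empty.2 hTl
  have hqT : q ∉ T := hdisj.notMem_of_mem_left hqS
  have hlST : l ⊆ S ∪ T := hl.subset_of_mem_of_mem_diff hM hT hST subset_union_right hpl hpT
    hql ⟨Or.inl hqS, hqT⟩
  have hST2 := deg_eq_two ⟨p, hpl⟩ hlST
  have hT1 : deg T l ≤ 1 := deg_le_one fun h => hqT (h hql)
  by_cases hXl : (X ∩ l).Nonempty
  · have := one_le_deg hXl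
    have := deg_le_two (X := S ∪ X) (l := l)
    omega
  · have hpSX : p ∉ S ∪ X := fun h => h.elim (hdisj.notMem_of_mem_right hpT)
      fun hpX => hXl ⟨p, hpX, hpl⟩
    have := deg_le_one (X := S ∪ X) fun h => hpSX (h hpl)
    omega

section chain

variable {M : Matroid α} {L : Finset (Set α)} {x : Set α → ℝ} {F S : ℕ → Set α}

lemma sum_deg_union_add_le (hM : M.Loopless') (hL : ∀ l ∈ L, M.IsLine l)
    (hx : ∀ l ∈ L, 0 ≤ x l) {T X S : Set α} (hT : M.IsFlat T) (hST : M.IsFlat (S ∪ T))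
    (hdisj : Disjoint S T) (hXT : X ⊆ T) :
    ∑ l ∈ L, (deg (S ∪ X) l : ℝ) * x l + ∑ l ∈ L, (deg T l : ℝ) * x l
      ≤ ∑ l ∈ L, (deg (S ∪ T) l : ℝ) * x l + ∑ l ∈ L, (deg X l : ℝ) * x l := by
  simp only [← Finset.sum_add_distrib, ← add_mul]
  refine Finset.sum_le_sum fun l hlL => mul_le_mul_of_nonneg_right ?_ (hx l hlL)
  exact_mod_cast deg_union_add_deg_le hM (hL l hlL) hT hST hdisj hXT

lemma biUnion_range_subset {n : ℕ} (hF : ∀ i < n, F i ⊆ F (i + 1))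
    (hS : ∀ i < n, S i ⊆ F (i + 1)) : ⋃ i ∈ Finset.range n, S i ⊆ F n := by
  induction n with
  | zero => simp
  | succ n ih =>
    rw [Finset.range_add_one, Finset.set_biUnion_insert]
    exact union_subset (hS n n.lt_add_one) ((ih (fun i hi => hF i (by omega))
      fun i hi => hS i (by omega)).trans (hF n n.lt_add_one))

lemma sum_deg_biUnion_le (hM : M.Loopless') (hL : ∀ l ∈ L, M.IsLine l)
    (hx : IsFracMatching M L x) {n : ℕ} (hFflat : ∀ i < n, M.IsFlat (F i))
    (hF : ∀ i < n, F i ⊆ F (i + 1))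
    (hS : ∀ i < n, S i ⊆ F (i + 1) \ F i ∧ M.IsFlat (S i ∪ F i))
    (htight : ∀ i < n, ∑ l ∈ L, (deg (F i) l : ℝ) * x l = (M.rk' (F i) : ℝ)) :
    ∑ l ∈ L, (deg (⋃ i ∈ Finset.range n, S i) l : ℝ) * x l
      ≤ ∑ i ∈ Finset.range n, ((M.rk' (S i ∪ F i) : ℝ) - (M.rk' (F i) : ℝ)) := by
  induction n with
  | zero => simp
  | succ n ih =>
    have ih := ih (fun i hi => hFflat i (by omega)) (fun i hi => hF i (by omega))
      (fun i hi => hS i (by omega)) fun i hi => htight i (by omega)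
    have hUF : ⋃ i ∈ Finset.range n, S i ⊆ F n := biUnion_range_subset
      (fun i hi => hF i (by omega)) fun i hi => (hS i (by omega)).1.trans sdiff_subset
    obtain ⟨hSF, hSflat⟩ := hS n n.lt_add_one
    have hstep := sum_deg_union_add_le hM hL hx.1 (hFflat n n.lt_add_one) hSflat
      (subset_sdiff.1 hSF).2 hUF
    have hflat := hx.2 _ hSflat
    rw [Finset.range_add_one, Finset.set_biUnion_insert,
      Finset.sum_insert Finset.notMem_range_self]
    linarith [htight n n.lt_add_one]

end chain

theorem stmt_9_general (M : Matroid α) (hM : M.Loopless')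
    (L : Finset (Set α)) (hL : ∀ l ∈ L, M.IsLine l)
    (k : ℕ) (F : ℕ → Set α) (hF0 : F 0 = ∅)
    (hFflat : ∀ i ≤ k+1, M.IsFlat (F i)) (hFmono : ∀ i ≤ k, F i ⊂ F (i+1))
    (x : Set α → ℝ) (hx : IsFracMatching M L x)
    (htight : ∀ i, 1 ≤ i → i ≤ k →
      ∑ l ∈ L, (deg (F i) l : ℝ) * x l = (M.rk' (F i) : ℝ)) :
    ∀ S : ℕ → Set α,
      (∀ i ≤ k, S i ⊆ F (i+1) \ F i ∧ M.IsFlat (S i ∪ F i)) →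
      ∑ l ∈ L, (deg (⋃ i ∈ Finset.range (k+1), S i) l : ℝ) * x l
        ≤ ∑ i ∈ Finset.range (k+1), ((M.rk' (S i ∪ F i) : ℝ) - (M.rk' (F i) : ℝ)) := by
  intro S hS
  refine sum_deg_biUnion_le hM hL hx (fun i hi => hFflat i hi.le)
    (fun i hi => (hFmono i (by omega)).subset) (fun i hi => hS i (by omega)) fun i hi => ?_
  rcases i with _ | i
  · simp [hF0, M.rk'_empty]
  · exact htight (i + 1) (by omega) (by omega)

/-- a fractional matching of `(M, L)` that is tight on all flats of the
chain is a fractional matching of `(M⋆𝓕, L)`. -/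
theorem stmt_9 (M : Matroid α) [M.RankFinite] (hM : M.Loopless')
    (L : Finset (Set α)) (hL : ∀ l ∈ L, M.IsLine l)
    (k : ℕ) (F : ℕ → Set α) (hF0 : F 0 = ∅) (hFE : F (k+1) = M.E)
    (hFflat : ∀ i ≤ k+1, M.IsFlat (F i)) (hFmono : ∀ i ≤ k, F i ⊂ F (i+1))
    (x : Set α → ℝ) (hx : IsFracMatching M L x)
    (htight : ∀ i, 1 ≤ i → i ≤ k →
      ∑ l ∈ L, (deg (F i) l : ℝ) * x l = (M.rk' (F i) : ℝ)) :
    ∀ S : ℕ → Set α,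
      (∀ i ≤ k, S i ⊆ F (i+1) \ F i ∧ M.IsFlat (S i ∪ F i)) →
      ∑ l ∈ L, (deg (⋃ i ∈ Finset.range (k+1), S i) l : ℝ) * x l
        ≤ ∑ i ∈ Finset.range (k+1), ((M.rk' (S i ∪ F i) : ℝ) - (M.rk' (F i) : ℝ)) :=
  stmt_9_general M hM L hL k F hF0 hFflat hFmono x hx htight
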